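/- arXiv:2112.05297 — 6 statements merged into one kernel-verified Lean document; each statement's English description precedes it below -/
import Mathlib

section
/- The set Hom(Z_n, Z_n) of quandle endomorphisms of the dihedral quandle Z_n has exactly n² elements. -/
lemma dihedral_hom_affine {n : ℕ} [NeZero n]
    (φ : ZMod n → ZMod n) (h : ∀ x y : ZMod n, φ (2 * y - x) = 2 * φ y - φ x)
    (x : ZMod n) : φ x = (φ 1 - φ 0) * x + φ 0 := by
  have hneg : ∀ x : ZMod n, φ (-x) = 2 * φ 0 - φ x := by
    intro x
    have := h x 0
    simpa using this
  have hstep : ∀ x : ZMod n, φ (x + 2) = φ x + 2 * (φ 1 - φ 0) := by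
    intro x
    have h1 := h (-x) 1
    rw [hneg] at h1
    have : (2 : ZMod n) * 1 - -x = x + 2 := by ring
    rw [this] at h1
    rw [h1]; ring
  have key : ∀ m : ℕ, φ ((m : ZMod n)) = (φ 1 - φ 0) * m + φ 0 := by
    intro m
    induction m using Nat.twoStepInduction with
    | zero => simp
    | one => simp
    | more m ih _ =>
      push_cast
      rw [hstep, ih]; ring
  have := key x.val
  rwa [ZMod.natCast_val, ZMod.cast_id] at this

/-- The dihedral quandle `ZMod n` (`n ≥ 3`) has exactly `n²` quandle endomorphisms. -/
theorem dihedral_hom_card (n : ℕ) (hn : 3 ≤ n) [NeZero n] :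
    Fintype.card {φ : ZMod n → ZMod n // ∀ x y : ZMod n, φ (2 * y - x) = 2 * φ y - φ x}
      = n ^ 2 := by
  have e : {φ : ZMod n → ZMod n // ∀ x y : ZMod n, φ (2 * y - x) = 2 * φ y - φ x}
      ≃ ZMod n × ZMod n :=
    { toFun := fun φ => (φ.1 1 - φ.1 0, φ.1 0)
      invFun := fun p => ⟨fun x => p.1 * x + p.2, by intro x y; ring⟩
      left_inv := by
        intro φ
        ext x
        exact (dihedral_hom_affine φ.1 φ.2 x).symm
      right_inv := by
        intro p
        simp }
  rw [Fintype.card_congr e, Fintype.card_prod, ZMod.card, sq]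
end

section
/- The map (a, b) ↦ (k ↦ k(b - a) + a mod n) is a bijection from Z_n × Z_n onto the set of quandle endomorphisms of the dihedral quandle Z_n; equivalently, every quandle endomorphism of Z_n is an affine map k ↦ (mk + a) mod n for unique m, a ∈ Z_n. -/
/-! Taking `x = j - 1` and `y = j`, the endomorphism condition says that `j ↦ φ j` has vanishing
second difference on `ℤ`, hence is affine in `j`; since `ℤ → ZMod n` is surjective, `φ` is affine,
and its coefficients are forced to be `a = φ 0`, `m = φ 1 - φ 0`. -/

section IntSequence

variable {G : Type*} [AddCommGroup G]

theorem eq_zsmul_add_of_forall_succ_sub_eq (f : ℤ → G) (c : G)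
    (h : ∀ k, f (k + 1) - f k = c) (k : ℤ) : f k = k • c + f 0 := by
  induction k using Int.induction_on with
  | zero => simp
  | succ k ih => rw [← sub_add_cancel (f (k + 1)) (f k), h, ih, add_zsmul, one_zsmul]; abel
  | pred k ih =>
    have hk := h (-(k : ℤ) - 1)
    rw [sub_add_cancel, ih, sub_eq_iff_eq_add] at hk
    rw [eq_sub_of_add_eq' hk.symm, sub_zsmul, one_zsmul]; abel

theorem eq_zsmul_add_of_forall_eq_two_nsmul_sub (f : ℤ → G)
    (h : ∀ k, f (k + 1) = 2 • f k - f (k - 1)) (k : ℤ) : f k = k • (f 1 - f 0) + f 0 := by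
  have hdiff : ∀ j, f (j + 1) - f j = f 1 - f 0 := by
    intro j
    have hconst := eq_zsmul_add_of_forall_succ_sub_eq (fun j ↦ f (j + 1) - f j) 0
      (fun i ↦ by simp only [h (i + 1), add_sub_cancel_right, two_nsmul]; abel) j
    simpa using hconst
  exact eq_zsmul_add_of_forall_succ_sub_eq f _ hdiff k

end IntSequence

section AffineMaps

variable {R : Type*} [Ring R]

theorem eq_mul_add_of_map_two_mul_sub (hR : Function.Surjective (Int.cast : ℤ → R))
    {φ : R → R} (h : ∀ x y, φ (2 * y - x) = 2 * φ y - φ x) (x : R) :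
    φ x = (φ 1 - φ 0) * x + φ 0 := by
  obtain ⟨k, rfl⟩ := hR x
  have hint := eq_zsmul_add_of_forall_eq_two_nsmul_sub (fun j : ℤ ↦ φ j)
    (fun j ↦ by simpa [two_nsmul, two_mul] using h (j - 1) j) k
  simpa [zsmul_eq_mul, Int.cast_comm] using hint

theorem coeffs_eq_of_forall_eq_mul_add {φ : R → R} {m a : R} (h : ∀ x, φ x = m * x + a) :
    (m, a) = (φ 1 - φ 0, φ 0) := by
  simp [h]

end AffineMaps

theorem dihedral_hom_affine_bijection_general (n : ℕ) (φ : ZMod n → ZMod n) :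
    (∀ x y : ZMod n, φ (2 * y - x) = 2 * φ y - φ x) ↔
    (∃! ma : ZMod n × ZMod n, ∀ k : ZMod n, φ k = ma.1 * k + ma.2) := by
  constructor
  · intro h
    exact ⟨(φ 1 - φ 0, φ 0), eq_mul_add_of_map_two_mul_sub ZMod.intCast_surjective h,
      fun _ hma ↦ coeffs_eq_of_forall_eq_mul_add hma⟩
  · rintro ⟨⟨m, a⟩, hma, -⟩ x y
    simp only [hma]
    ring

/-- Every quandle endomorphism of the dihedral quandle `ZMod n` (`n ≥ 3`) is an affine
map `k ↦ m k + a` for a unique pair `(m, a) ∈ ZMod n × ZMod n`, and conversely every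
affine map is an endomorphism. -/
theorem dihedral_hom_affine_bijection (n : ℕ) (hn : 3 ≤ n) (φ : ZMod n → ZMod n) :
    (∀ x y : ZMod n, φ (2 * y - x) = 2 * φ y - φ x) ↔
    (∃! ma : ZMod n × ZMod n, ∀ k : ZMod n, φ k = ma.1 * k + ma.2) :=
  dihedral_hom_affine_bijection_general n φ
end

section
/- Suppose ψ : Z_p → Z_n satisfies the coloring conditions for the (p,2)-torus link in the dihedral quandle Z_n (ψ(i-2) ≡ 2ψ(i-1) - ψ(i), ψ(p) ≡ 2ψ(1) - ψ(2), ψ(p-1) ≡ 2ψ(p) - ψ(1), all mod n). Then for every 1 ≤ i ≤ p, ψ(2) ≡ (i-1)·ψ(i) - (i-2)·ψ(i+1) (mod n), where indices are taken cyclically modulo p. -/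
/-- For any `ZMod n`-coloring `ψ` of the `(p,2)`-torus link and any `1 ≤ i ≤ p`,
`ψ(x_2) = (i-1) ψ(x_i) - (i-2) ψ(x_{i+1})`, indices taken cyclically mod `p`. -/
theorem torus_coloring_telescoping (p n : ℕ) (hp : 3 ≤ p) (hn : 2 ≤ n)
    (ψ : ℕ → ZMod n)
    (hrec : ∀ i : ℕ, 3 ≤ i → i ≤ p → ψ (i - 2) = 2 * ψ (i - 1) - ψ i)
    (hp1 : ψ p = 2 * ψ 1 - ψ 2)
    (hp2 : ψ (p - 1) = 2 * ψ p - ψ 1) :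
    ∀ i : ℕ, 1 ≤ i → i ≤ p →
      ψ 2 = ((i : ZMod n) - 1) * ψ i
            - ((i : ZMod n) - 2) * ψ (if i = p then 1 else i + 1) := by
  intro i hi1
  induction i, hi1 using Nat.le_induction with
  | base =>
    intro _
    have h1p : 1 ≠ p := by omega
    rw [if_neg h1p]
    push_cast
    ring
  | succ i hi ih =>
    intro hip
    have hiP : i ≤ p := by omega
    have IH := ih hiP
    have hip' : i ≠ p := by omega
    rw [if_neg hip'] at IH
    by_cases h : i + 1 = p
    · rw [if_pos h]
      have hpm : ψ i = 2 * ψ p - ψ 1 := by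
        have : i = p - 1 := by omega
        rw [this]; exact hp2
      have hψ : ψ (i + 1) = ψ p := by rw [h]
      rw [hψ, hpm] at IH
      rw [IH, hψ]
      push_cast
      ring
    · rw [if_neg h]
      have hr := hrec (i + 2) (by omega) (by omega)
      norm_num at hr
      rw [hr] at IH
      rw [IH]
      push_cast
      ring
end

section
/- If gcd(p, n) = c, then the number of Z_n-quandle colorings of the (p,2)-torus link is exactly n·c; among these, exactly n are trivial (constant) and exactly n(c-1) are nontrivial. -/
section aux

variable {p n : ℕ}

/-- The additive hom `ZMod p →+ ZMod n` sending `k` to `k • d`, when `p • d = 0`. -/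
def torusPhi (p : ℕ) {n : ℕ} (d : ZMod n) (hd : (p : ℤ) • d = 0) : ZMod p →+ ZMod n :=
  ZMod.lift p ⟨zmultiplesHom (ZMod n) d, hd⟩

lemma torusPhi_intCast (d : ZMod n) (hd : (p : ℤ) • d = 0) (k : ℤ) :
    torusPhi p d hd ((k : ℤ) : ZMod p) = k • d :=
  ZMod.lift_coe _ _ _

lemma torusPhi_natCast (d : ZMod n) (hd : (p : ℤ) • d = 0) (k : ℕ) :
    torusPhi p d hd ((k : ℕ) : ZMod p) = k • d := by
  have := torusPhi_intCast d hd (k : ℤ)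
  simpa using this

/-- From the recurrence, successive differences are constant. -/
lemma diff_const [NeZero p] {ψ : ZMod p → ZMod n}
    (hψ : ∀ i : ZMod p, ψ (i - 2) = 2 * ψ (i - 1) - ψ i) (i : ZMod p) :
    ψ (i - 1) - ψ i = ψ 0 - ψ 1 := by
  have key : ∀ j : ZMod p, ψ (j - 2) - ψ (j - 1) = ψ (j - 1) - ψ j := by
    intro j; rw [hψ j]; ring
  have main : ∀ k : ℕ, ψ ((1 : ZMod p) - k - 1) - ψ (1 - k) = ψ 0 - ψ 1 := by
    intro k
    induction k with
    | zero => simp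
    | succ k ih =>
      have := key ((1 : ZMod p) - k)
      push_cast
      have e1 : (1 : ZMod p) - (k + 1) - 1 = (1 - k) - 2 := by ring
      have e2 : (1 : ZMod p) - (k + 1) = (1 - k) - 1 := by ring
      rw [e1, e2, this]
      exact ih
  have hi : i = (1 : ZMod p) - (((1 - i : ZMod p).val : ℕ) : ZMod p) := by
    rw [ZMod.natCast_rightInverse (1 - i)]; ring
  calc ψ (i - 1) - ψ i
      = ψ ((1 : ZMod p) - (((1 - i : ZMod p).val : ℕ) : ZMod p) - 1)
        - ψ ((1 : ZMod p) - (((1 - i : ZMod p).val : ℕ) : ZMod p)) := by rw [← hi]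
    _ = ψ 0 - ψ 1 := main _

lemma shift_repr [NeZero p] {ψ : ZMod p → ZMod n}
    (hψ : ∀ i : ZMod p, ψ (i - 2) = 2 * ψ (i - 1) - ψ i) :
    ∀ (k : ℕ) (i : ZMod p), ψ (i - k) = ψ i + k • (ψ 0 - ψ 1) := by
  intro k
  induction k with
  | zero => simp
  | succ k ih =>
    intro i
    have e : i - ((k : ℕ) + 1 : ℕ) = (i - k) - 1 := by push_cast; ring
    rw [e]
    have := diff_const hψ (i - k)
    have h1 : ψ ((i - k) - 1) = ψ (i - k) + (ψ 0 - ψ 1) := by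
      linear_combination this
    rw [h1, ih i, succ_nsmul]
    ring

lemma psmul_eq_zero {ψ : ZMod p → ZMod n} [NeZero p]
    (hψ : ∀ i : ZMod p, ψ (i - 2) = 2 * ψ (i - 1) - ψ i) :
    (p : ℤ) • (ψ 0 - ψ 1) = 0 := by
  have := shift_repr hψ p 0
  have h0 : ((p : ℕ) : ZMod p) = 0 := ZMod.natCast_self p
  rw [h0, sub_zero] at this
  have h2 : (p : ℕ) • (ψ 0 - ψ 1) = 0 := (left_eq_add.mp this).symm ▸ rfl
  simpa [natCast_zsmul] using h2

end aux

section equivs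

variable (p n : ℕ) [NeZero p] [NeZero n]

/-- Solutions are in bijection with pairs `(a, d)` with `p • d = 0`. -/
noncomputable def torusEquiv :
    {ψ : ZMod p → ZMod n // ∀ i : ZMod p, ψ (i - 2) = 2 * ψ (i - 1) - ψ i} ≃
      ZMod n × {d : ZMod n // (p : ℤ) • d = 0} where
  toFun ψ := (ψ.1 0, ⟨ψ.1 0 - ψ.1 1, psmul_eq_zero ψ.2⟩)
  invFun ad := ⟨fun i => ad.1 - torusPhi p ad.2.1 ad.2.2 i, by
    intro i
    have h2 : torusPhi p ad.2.1 ad.2.2 (i - 2) = torusPhi p ad.2.1 ad.2.2 i - 2 • ad.2.1 := by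
      rw [map_sub]
      congr 1
      have : ((2 : ℕ) : ZMod p) = (2 : ZMod p) := by norm_num
      rw [← this, torusPhi_natCast]
    have h1 : torusPhi p ad.2.1 ad.2.2 (i - 1) = torusPhi p ad.2.1 ad.2.2 i - 1 • ad.2.1 := by
      rw [map_sub]
      congr 1
      have : ((1 : ℕ) : ZMod p) = (1 : ZMod p) := by norm_num
      rw [← this, torusPhi_natCast]
    dsimp only
    rw [h1, h2]
    ring⟩
  left_inv := by
    rintro ⟨ψ, hψ⟩
    ext i
    simp only
    have hrepr := shift_repr hψ ((-i : ZMod p).val) 0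
    have hcast : ((((-i : ZMod p).val : ℕ)) : ZMod p) = -i := ZMod.natCast_rightInverse _
    rw [hcast] at hrepr
    simp only [zero_sub, neg_neg] at hrepr
    have hphi : torusPhi p (ψ 0 - ψ 1) (psmul_eq_zero hψ) i
        = -(((-i : ZMod p).val : ℕ) • (ψ 0 - ψ 1)) := by
      have hi : i = -((((-i : ZMod p).val : ℕ)) : ZMod p) := by rw [hcast]; ring
      conv_lhs => rw [hi]
      rw [map_neg, torusPhi_natCast]
    rw [hphi, hrepr]
    ring
  right_inv := by
    rintro ⟨a, d, hd⟩
    have h0 : torusPhi p d hd 0 = 0 := map_zero _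
    have h1 : torusPhi p d hd 1 = d := by
      have : ((1 : ℕ) : ZMod p) = (1 : ZMod p) := by norm_num
      rw [← this, torusPhi_natCast]; simp
    simp only [Prod.mk.injEq, Subtype.mk.injEq, h0, h1]
    constructor
    · ring
    · ring

/-- The kernel of multiplication by `p` in `ZMod n` has `gcd p n` elements. -/
noncomputable def kerEquiv :
    ZMod (Nat.gcd p n) ≃ {d : ZMod n // (p : ℤ) • d = 0} := by
  classical
  set c := Nat.gcd p n with hc
  have hc0 : c ≠ 0 := Nat.gcd_ne_zero_left (NeZero.ne p)
  haveI : NeZero c := ⟨hc0⟩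
  have hcn : c ∣ n := Nat.gcd_dvd_right p n
  have hcp : c ∣ p := Nat.gcd_dvd_left p n
  set n' := n / c with hn'
  set p' := p / c with hp'
  have hnn : n = c * n' := (Nat.mul_div_cancel' hcn).symm
  have hpp : p = c * p' := (Nat.mul_div_cancel' hcp).symm
  have hn'0 : n' ≠ 0 := by
    intro h; rw [h, mul_zero] at hnn; exact (NeZero.ne n) hnn
  have hcop : Nat.Coprime p' n' := Nat.coprime_div_gcd_div_gcd (Nat.gcd_pos_of_pos_left n (Nat.pos_of_ne_zero (NeZero.ne p)))
  -- key equivalence between `p • d = 0` and the nat statement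
  have hmem : ∀ d : ZMod n, ((p : ℤ) • d = 0) ↔ (n ∣ p * d.val) := by
    intro d
    rw [natCast_zsmul, nsmul_eq_mul]
    constructor
    · intro h
      have : ((p * d.val : ℕ) : ZMod n) = 0 := by
        push_cast
        rw [ZMod.natCast_rightInverse d]
        exact h
      exact (ZMod.natCast_eq_zero_iff _ _).mp this
    · intro h
      have : ((p * d.val : ℕ) : ZMod n) = 0 := (ZMod.natCast_eq_zero_iff _ _).mpr h
      push_cast at this
      rwa [ZMod.natCast_rightInverse d] at this
  refine Equiv.ofBijective (fun x => ⟨((n' * x.val : ℕ) : ZMod n), ?_⟩) ⟨?_, ?_⟩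
  · rw [natCast_zsmul, nsmul_eq_mul]
    have hdvd : n ∣ p * (n' * x.val) := ⟨p' * x.val, by rw [hnn, hpp]; ring⟩
    have h := (ZMod.natCast_eq_zero_iff _ n).mpr hdvd
    push_cast at h ⊢
    exact h
  · intro x y hxy
    simp only [Subtype.mk.injEq] at hxy
    rw [ZMod.natCast_eq_natCast_iff] at hxy
    rw [hnn, mul_comm c n'] at hxy
    have := Nat.ModEq.mul_left_cancel' hn'0 hxy
    have hx := ZMod.val_lt x
    have hy := ZMod.val_lt y
    have : x.val = y.val := by
      have h' := this
      unfold Nat.ModEq at h'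
      rwa [Nat.mod_eq_of_lt hx, Nat.mod_eq_of_lt hy] at h'
    exact ZMod.val_injective _ this
  · rintro ⟨d, hd⟩
    rw [hmem] at hd
    -- n' ∣ d.val
    have h1 : c * n' ∣ (c * p') * d.val := by rw [← hnn, ← hpp]; exact hd
    have h2 : n' ∣ p' * d.val := by
      rcases h1 with ⟨k, hk⟩
      refine ⟨k, ?_⟩
      have hcpos : 0 < c := Nat.pos_of_ne_zero hc0
      apply Nat.eq_of_mul_eq_mul_left hcpos
      calc c * (p' * d.val) = c * p' * d.val := by ring
      _ = c * n' * k := hk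
      _ = c * (n' * k) := by ring
    have h3 : n' ∣ d.val := (Nat.Coprime.dvd_of_dvd_mul_left (hcop.symm) h2)
    rcases h3 with ⟨k, hk⟩
    have hklt : k < c := by
      have h5 : n' * k < n' * c := by
        rw [← hk]
        calc d.val < n := ZMod.val_lt d
        _ = n' * c := by rw [hnn, mul_comm]
      exact lt_of_mul_lt_mul_left h5 (Nat.zero_le n')
    refine ⟨(k : ZMod c), ?_⟩
    apply Subtype.ext
    simp only
    rw [ZMod.val_cast_of_lt hklt, ← hk, ZMod.natCast_rightInverse d]

end equivs

/-- If `gcd(p,n) = c`, the `(p,2)`-torus link has exactly `n·c` colorings by the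
dihedral quandle `ZMod n`; exactly `n` of them are trivial (constant) and exactly
`n(c-1)` are nontrivial. -/
theorem torus_colorings_count (p n : ℕ) (hp : 2 ≤ p) (hn : 2 ≤ n) [NeZero p] [NeZero n] :
    Fintype.card {ψ : ZMod p → ZMod n // ∀ i : ZMod p, ψ (i - 2) = 2 * ψ (i - 1) - ψ i}
      = n * Nat.gcd p n ∧
    Fintype.card {ψ : ZMod p → ZMod n //
        (∀ i : ZMod p, ψ (i - 2) = 2 * ψ (i - 1) - ψ i) ∧ (∃ c, ∀ i, ψ i = c)}
      = n ∧
    Fintype.card {ψ : ZMod p → ZMod n //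
        (∀ i : ZMod p, ψ (i - 2) = 2 * ψ (i - 1) - ψ i) ∧ ¬(∃ c, ∀ i, ψ i = c)}
      = n * (Nat.gcd p n - 1) := by
  classical
  have hg0 : Nat.gcd p n ≠ 0 := Nat.gcd_ne_zero_left (NeZero.ne p)
  haveI : NeZero (Nat.gcd p n) := ⟨hg0⟩
  set P : (ZMod p → ZMod n) → Prop :=
    fun ψ => ∀ i : ZMod p, ψ (i - 2) = 2 * ψ (i - 1) - ψ i with hP
  set Q : (ZMod p → ZMod n) → Prop := fun ψ => ∃ c, ∀ i, ψ i = c with hQ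
  have h1 : Fintype.card {ψ : ZMod p → ZMod n // P ψ} = n * Nat.gcd p n := by
    rw [Fintype.card_congr (torusEquiv p n), Fintype.card_prod, ZMod.card,
      Fintype.card_congr (kerEquiv p n).symm, ZMod.card]
  have h2 : Fintype.card {ψ : ZMod p → ZMod n // P ψ ∧ Q ψ} = n := by
    have e : {ψ : ZMod p → ZMod n // P ψ ∧ Q ψ} ≃ ZMod n :=
      { toFun := fun ψ => ψ.1 0
        invFun := fun a => ⟨fun _ => a, fun i => by ring, ⟨a, fun _ => rfl⟩⟩
        left_inv := by
          rintro ⟨ψ, hψ, c0, hc0⟩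
          apply Subtype.ext
          funext i
          simp only [hc0 i, hc0 0]
        right_inv := fun a => rfl }
    rw [Fintype.card_congr e, ZMod.card]
  have esum : {ψ : ZMod p → ZMod n // P ψ ∧ Q ψ} ⊕ {ψ : ZMod p → ZMod n // P ψ ∧ ¬ Q ψ}
      ≃ {ψ : ZMod p → ZMod n // P ψ} :=
    Equiv.sumCongr (Equiv.subtypeSubtypeEquivSubtypeInter P Q).symm
        (Equiv.subtypeSubtypeEquivSubtypeInter P (fun ψ => ¬ Q ψ)).symm
      |>.trans (Equiv.sumCompl (fun x : {ψ : ZMod p → ZMod n // P ψ} => Q x.1))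
  have hsum : Fintype.card {ψ : ZMod p → ZMod n // P ψ ∧ Q ψ}
      + Fintype.card {ψ : ZMod p → ZMod n // P ψ ∧ ¬ Q ψ}
      = Fintype.card {ψ : ZMod p → ZMod n // P ψ} := by
    rw [← Fintype.card_sum]
    exact Fintype.card_congr esum
  have h3 : Fintype.card {ψ : ZMod p → ZMod n // P ψ ∧ ¬ Q ψ}
      = n * (Nat.gcd p n - 1) := by
    have hceq : n * Nat.gcd p n = n * (Nat.gcd p n - 1) + n := by
      conv_lhs => rw [← Nat.succ_pred_eq_of_pos (Nat.pos_of_ne_zero hg0)]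
      rw [Nat.mul_succ, Nat.pred_eq_sub_one]
    have := hsum
    rw [h1, h2, hceq] at this
    have h' : Fintype.card {ψ : ZMod p → ZMod n // P ψ ∧ ¬ Q ψ} + n
        = n * (Nat.gcd p n - 1) + n := by rw [← this]; ring
    exact Nat.add_right_cancel h'
  exact ⟨h1, h2, h3⟩
end

section
/- Let n ≥ 2, c a prime divisor of n, d = n/c. Fix a, b ∈ Z_n with b ≡ a + kd (mod n) for some 1 ≤ k ≤ c-1, and fix a', b' ∈ Z_n with b' ≡ a' + hd (mod n) for some 0 ≤ h ≤ c-1. Then the number of quandle endomorphisms φ of the dihedral quandle Z_n with φ(a) = a' and φ(b) = b' is exactly d. -/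
/-!
A map `φ` of `ZMod n` preserving `x ▷ y = 2y - x` has constant second differences, hence is
affine, `φ x = m x + t`. The two point conditions fix `t` once `m` is known and cut `m` down to
the solutions of `m (k d) = h d`. With `n = c d` this says `m k ≡ h (mod c)`, and since `k` is a
unit mod `c` this is a single fibre of the reduction `ZMod n → ZMod c`, which has `d` elements.
-/

namespace AddMonoidHom

theorem card_mul_card_fiber_of_surjective {G M F : Type*} [AddGroup G] [Fintype G] [AddMonoid M]
    [Fintype M] [DecidableEq M] [FunLike F G M] [AddMonoidHomClass F G M] {f : F}
    (hf : Function.Surjective f) (y : M) :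
    Fintype.card M * Fintype.card {g // f g = y} = Fintype.card G := by
  classical
  calc Fintype.card M * Fintype.card {g // f g = y}
      = ∑ z : M, (Finset.univ.filter fun g => f g = z).card := by
        rw [Fintype.card_subtype, Finset.sum_congr rfl fun z _ =>
          card_fiber_eq_of_mem_range f (hf z) (hf y), Finset.sum_const, smul_eq_mul,
          Finset.card_univ]
    _ = Fintype.card G :=
        (Finset.card_eq_sum_card_fiberwise fun _ _ => Finset.mem_univ _).symm

end AddMonoidHom

namespace ZMod

theorem eq_mul_add_of_map_two_mul_sub {n : ℕ} {φ : ZMod n → ZMod n}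
    (hφ : ∀ x y, φ (2 * y - x) = 2 * φ y - φ x) (x : ZMod n) :
    φ x = (φ 1 - φ 0) * x + φ 0 := by
  set ψ : ZMod n → ZMod n := fun x => φ x - ((φ 1 - φ 0) * x + φ 0) with hψ
  have hψ_law : ∀ x y, ψ (2 * y - x) = 2 * ψ y - ψ x := by
    intro x y
    simp only [hψ, hφ]
    ring
  have up : ∀ x, ψ x = 0 ∧ ψ (x + 1) = 0 → ψ (x + 1) = 0 ∧ ψ (x + 1 + 1) = 0 := by
    rintro x ⟨h0, h1⟩
    refine ⟨h1, ?_⟩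
    have := hψ_law x (x + 1)
    rw [show 2 * (x + 1) - x = x + 1 + 1 by ring, h0, h1] at this
    simpa using this
  have down : ∀ x, ψ x = 0 ∧ ψ (x + 1) = 0 → ψ (x - 1) = 0 ∧ ψ (x - 1 + 1) = 0 := by
    rintro x ⟨h0, h1⟩
    refine ⟨?_, by simpa using h0⟩
    have := hψ_law (x + 1) x
    rw [show 2 * x - (x + 1) = x - 1 by ring, h0, h1] at this
    simpa using this
  have hψ_int : ∀ j : ℤ, ψ j = 0 ∧ ψ (j + 1) = 0 := by
    intro j
    induction j with
    | zero => simp [hψ]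
    | succ i ih => push_cast at ih ⊢; exact up _ ih
    | pred i ih => push_cast at ih ⊢; exact down _ ih
  obtain ⟨j, rfl⟩ := intCast_surjective x
  exact sub_eq_zero.mp (hψ_int j).1

theorem card_dihedral_hom_eq_card_slope {n : ℕ} [NeZero n] (a a' δ δ' : ZMod n) :
    Fintype.card {φ : ZMod n → ZMod n //
        (∀ x y : ZMod n, φ (2 * y - x) = 2 * φ y - φ x) ∧
        φ a = a' ∧ φ (a + δ) = a' + δ'} =
      Fintype.card {m : ZMod n // m * δ = δ'} := by
  symm
  refine Fintype.card_congr
    { toFun := fun m => ⟨fun x => m * (x - a) + a', fun x y => by ring, by ring,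
        by simp [m.2, add_comm]⟩
      invFun := fun φ => ⟨φ.1 1 - φ.1 0, ?_⟩
      left_inv := fun m => by ext; ring
      right_inv := fun φ => ?_ }
  · obtain ⟨φ, hφ, ha, hδ⟩ := φ
    have affine := eq_mul_add_of_map_two_mul_sub hφ
    rw [affine a] at ha
    rw [affine (a + δ)] at hδ
    linear_combination hδ - ha
  · obtain ⟨φ, hφ, ha, -⟩ := φ
    have affine := eq_mul_add_of_map_two_mul_sub hφ
    ext x
    simp only
    rw [← ha, affine x, affine a]
    ring

theorem mul_natCast_eq_zero_iff_castHom_eq_zero {c d : ℕ} (hd : d ≠ 0) (x : ZMod (c * d)) :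
    x * d = 0 ↔ castHom (dvd_mul_right c d) (ZMod c) x = 0 := by
  obtain ⟨j, rfl⟩ := intCast_surjective x
  rw [map_intCast, ← Int.cast_natCast, ← Int.cast_mul, intCast_zmod_eq_zero_iff_dvd,
    intCast_zmod_eq_zero_iff_dvd, Nat.cast_mul,
    Int.mul_dvd_mul_iff_right (Int.natCast_ne_zero.mpr hd)]

theorem card_mul_mul_eq_mul_of_coprime {c d k : ℕ} [NeZero (c * d)] (hk : k.Coprime c)
    (y : ZMod (c * d)) :
    Fintype.card {m : ZMod (c * d) // m * (k * d) = y * d} = d := by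
  have hc : c ≠ 0 := left_ne_zero_of_mul (NeZero.ne (c * d))
  have hd : d ≠ 0 := right_ne_zero_of_mul (NeZero.ne (c * d))
  have : NeZero c := ⟨hc⟩
  set π := castHom (dvd_mul_right c d) (ZMod c)
  set u : ZMod c := π y * ((unitOfCoprime k hk)⁻¹ : (ZMod c)ˣ)
  have hsolution : ∀ m, m * (k * d) = y * d ↔ π m = u := by
    intro m
    rw [← sub_eq_zero, ← mul_assoc, ← sub_mul, mul_natCast_eq_zero_iff_castHom_eq_zero hd,
      map_sub, map_mul, map_natCast, sub_eq_zero, Units.eq_mul_inv_iff_mul_eq, coe_unitOfCoprime]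
  have hfiber := AddMonoidHom.card_mul_card_fiber_of_surjective
    (castHom_surjective (dvd_mul_right c d)) u
  rw [ZMod.card, ZMod.card, ← Fintype.card_congr (Equiv.subtypeEquivRight hsolution)] at hfiber
  exact Nat.eq_of_mul_eq_mul_left (Nat.pos_of_ne_zero hc) hfiber

end ZMod

theorem dihedral_hom_two_point_count_general (n c k h : ℕ) (hc : Nat.Prime c)
    (hdvd : c ∣ n) (hk1 : 1 ≤ k) (hk2 : k ≤ c - 1)
    (a a' : ZMod n) [NeZero n] :
    Fintype.card {φ : ZMod n → ZMod n //
        (∀ x y : ZMod n, φ (2 * y - x) = 2 * φ y - φ x) ∧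
        φ a = a' ∧ φ (a + ((k * (n / c) : ℕ) : ZMod n)) = a' + ((h * (n / c) : ℕ) : ZMod n)}
      = n / c := by
  obtain ⟨d, rfl⟩ := hdvd
  have hk : k.Coprime c := (Nat.coprime_of_lt_prime (by omega) (by omega) hc).symm
  rw [Nat.mul_div_cancel_left d hc.pos, ZMod.card_dihedral_hom_eq_card_slope, Nat.cast_mul,
    Nat.cast_mul]
  exact ZMod.card_mul_mul_eq_mul_of_coprime hk h

/-- Edge-weight count: if `c` is a prime divisor of `n`, `d = n/c`, `b = a + kd` with
`1 ≤ k ≤ c-1`, and `b' = a' + hd` with `0 ≤ h ≤ c-1`, then exactly `d` quandle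
endomorphisms `φ` of the dihedral quandle `ZMod n` satisfy `φ(a) = a'` and `φ(b) = b'`. -/
theorem dihedral_hom_two_point_count (n c k h : ℕ) (hn : 2 ≤ n) (hc : Nat.Prime c)
    (hdvd : c ∣ n) (hk1 : 1 ≤ k) (hk2 : k ≤ c - 1) (hh : h ≤ c - 1)
    (a a' : ZMod n) [NeZero n] :
    Fintype.card {φ : ZMod n → ZMod n //
        (∀ x y : ZMod n, φ (2 * y - x) = 2 * φ y - φ x) ∧
        φ a = a' ∧ φ (a + ((k * (n / c) : ℕ) : ZMod n)) = a' + ((h * (n / c) : ℕ) : ZMod n)}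
      = n / c :=
  dihedral_hom_two_point_count_general n c k h hc hdvd hk1 hk2 a a'
end

section
/- Let n ≥ 3 be prime and p an integer not divisible by n. Then for every pair of Z_n-quandle colorings ψ, ψ' of the (p,2)-torus link, the number of quandle endomorphisms φ of Z_n with φ ∘ ψ = ψ' is exactly n. (Hence the full quandle coloring quiver is the complete directed graph on n vertices with all edge weights n, including n loops at each vertex.) -/
/-- Any quandle endomorphism of the dihedral quandle on `ZMod n` is affine. -/
lemma endo_affine {n : ℕ} [NeZero n] (φ : ZMod n → ZMod n)
    (hφ : ∀ x y : ZMod n, φ (2 * y - x) = 2 * φ y - φ x) :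
    ∀ x : ZMod n, φ x = x * (φ 1 - φ 0) + φ 0 := by
  set a := φ 1 - φ 0 with ha
  have key : ∀ k : ℕ, φ ((k : ZMod n)) = (k : ZMod n) * a + φ 0 ∧
      φ ((k : ZMod n) + 1) = ((k : ZMod n) + 1) * a + φ 0 := by
    intro k
    induction k with
    | zero => constructor <;> simp [ha] <;> ring
    | succ k ih =>
      refine ⟨by push_cast; exact ih.2, ?_⟩
      have h := hφ ((k : ZMod n)) ((k : ZMod n) + 1)
      have e : (2 : ZMod n) * ((k : ZMod n) + 1) - (k : ZMod n) = ((k : ZMod n) + 1) + 1 := by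
        ring
      rw [e] at h
      rw [ih.1, ih.2] at h
      push_cast
      rw [h]; ring
  intro x
  have := (key x.val).1
  rwa [ZMod.natCast_val, ZMod.cast_id] at this

/-- A `ZMod n`-coloring of the `(p,2)`-torus link is constant when `n` is prime and `n ∤ p`. -/
lemma coloring_const {p n : ℕ} [NeZero p] [NeZero n] (hnp : Nat.Prime n) (hndvd : ¬ n ∣ p)
    (ψ : ZMod p → ZMod n)
    (hψ : ∀ i : ZMod p, ψ (i - 2) = 2 * ψ (i - 1) - ψ i) :
    ∀ i : ZMod p, ψ i = ψ 0 := by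
  haveI : Fact (Nat.Prime n) := ⟨hnp⟩
  -- consecutive differences are all equal
  have hstep : ∀ i : ZMod p, ψ (i + 1) - ψ (i + 2) = ψ i - ψ (i + 1) := by
    intro i
    have h := hψ (i + 2)
    have e1 : (i + 2 : ZMod p) - 2 = i := by ring
    have e2 : (i + 2 : ZMod p) - 1 = i + 1 := by ring
    rw [e1, e2] at h
    rw [h]; ring
  set d : ZMod n := ψ 0 - ψ 1 with hd
  have hdk : ∀ k : ℕ, ψ ((k : ZMod p)) - ψ ((k : ZMod p) + 1) = d := by
    intro k
    induction k with
    | zero => simp [hd]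
    | succ k ih =>
      push_cast
      have := hstep ((k : ZMod p))
      rw [ih] at this
      have e : (k : ZMod p) + 1 + 1 = (k : ZMod p) + 2 := by ring
      rw [← e] at this
      exact this
  have hval : ∀ k : ℕ, ψ ((k : ZMod p)) = ψ 0 - (k : ZMod n) * d := by
    intro k
    induction k with
    | zero => simp
    | succ k ih =>
      have := hdk k
      push_cast
      have : ψ ((k : ZMod p) + 1) = ψ ((k : ZMod p)) - d := by
        have h := hdk k
        linear_combination -h
      rw [this, ih]
      push_cast
      ring
  -- going around the cycle: p * d = 0, hence d = 0
  have hp0 : ψ ((p : ZMod p)) = ψ 0 := by rw [ZMod.natCast_self]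
  have hpd : (p : ZMod n) * d = 0 := by
    have := hval p
    rw [hp0] at this
    linear_combination this
  have hpne : (p : ZMod n) ≠ 0 := by
    rw [Ne, ZMod.natCast_eq_zero_iff]
    exact hndvd
  have hd0 : d = 0 := by
    rcases mul_eq_zero.mp hpd with h | h
    · exact absurd h hpne
    · exact h
  intro i
  have hi : ((i.val : ℕ) : ZMod p) = i := by rw [ZMod.natCast_val, ZMod.cast_id]
  have := hval i.val
  rw [hi, hd0] at this
  simpa using this

/-- For `n ≥ 3` prime with `n ∤ p`: between any two `ZMod n`-quandle colorings of the
`(p,2)`-torus link there are exactly `n` quandle endomorphisms `φ` with `φ ∘ ψ = ψ'`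
(so the full quiver is the complete directed graph with all edge weights `n`). -/
theorem torus_quiver_coprime (p n : ℕ) (hp : 2 ≤ p) (hn : 3 ≤ n) (hnp : Nat.Prime n)
    (hndvd : ¬ n ∣ p) [NeZero p] [NeZero n]
    (ψ ψ' : ZMod p → ZMod n)
    (hψ : ∀ i : ZMod p, ψ (i - 2) = 2 * ψ (i - 1) - ψ i)
    (hψ' : ∀ i : ZMod p, ψ' (i - 2) = 2 * ψ' (i - 1) - ψ' i) :
    Fintype.card {φ : ZMod n → ZMod n //
        (∀ x y : ZMod n, φ (2 * y - x) = 2 * φ y - φ x) ∧ φ ∘ ψ = ψ'} = n := by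
  have hc : ∀ i, ψ i = ψ 0 := coloring_const hnp hndvd ψ hψ
  have hc' : ∀ i, ψ' i = ψ' 0 := coloring_const hnp hndvd ψ' hψ'
  set c : ZMod n := ψ 0
  set c' : ZMod n := ψ' 0
  -- the composition condition reduces to φ c = c'
  have hcomp : ∀ φ : ZMod n → ZMod n, (φ ∘ ψ = ψ') ↔ φ c = c' := by
    intro φ
    constructor
    · intro h
      have := congrFun h 0
      simpa using this
    · intro h
      funext i
      simp only [Function.comp_apply, hc i, hc' i]
      exact h
  -- build an equivalence with ZMod n
  let e : ZMod n ≃ {φ : ZMod n → ZMod n //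
      (∀ x y : ZMod n, φ (2 * y - x) = 2 * φ y - φ x) ∧ φ ∘ ψ = ψ'} :=
  { toFun := fun a => ⟨fun x => a * (x - c) + c',
      ⟨fun x y => by ring, (hcomp _).mpr (by simp)⟩⟩
    invFun := fun φ => φ.1 (c + 1) - φ.1 c
    left_inv := fun a => by simp
    right_inv := fun φ => by
      obtain ⟨φ, hφ, hcc⟩ := φ
      have hcc' : φ c = c' := (hcomp φ).mp hcc
      have haff := endo_affine φ hφ
      ext x
      simp only
      rw [haff (c + 1), haff c, haff x, ← hcc', haff c]
      ring }
  rw [← Fintype.card_congr e, ZMod.card]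
end
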